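/- Let X be a finite type, let p : X → ℝ → ℝ be a parameterized probability distribution on X (p(x;θ) > 0 for all x, ∑_{x∈X} p(x;θ) = 1 for all θ) with θ ↦ p(x;θ) twice differentiable for each x, and let f : X → ℝ → ℝ with θ ↦ f(x;θ) twice differentiable for each x. Define L(θ) = ∑_{x∈X} p(x;θ) f(x;θ) and g(x;θ) = f(x;θ) ∂_θ log p(x;θ) + ∂_θ f(x;θ). Then the expectation of the surrogate-loss second-order estimator differs from the true second derivative by exactly the expectation of the missing term ∂_θ f · ∂_θ log p: for every θ, L''(θ) − ∑_{x∈X} p(x;θ) · ( g(x;θ) ∂_θ log p(x;θ) + f(x;θ) ∂²_θ log p(x;θ) + ∂²_θ f(x;θ) ) = ∑_{x∈X} p(x;θ) · ∂_θ f(x;θ) · ∂_θ log p(x;θ). -/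

import Mathlib

/-!
Termwise, `L'' = ∑ₓ (p'' f + 2 p' f' + p f'')`. With `(log p)' = p'/p` and
`(log p)'' = (p'' p - p'²)/p²`, the estimator's expectation contains
`p f (log p)'' + p f ((log p)')² = p'' f` and `p f''`, but its cross term `p g (log p)'` yields
only one copy `p' f'` of the two in `L''`; the other is `p f' (log p)'`.
-/

section SecondDerivative

variable {𝕜 : Type*} [NontriviallyNormedField 𝕜]

theorem deriv_deriv_eq_iteratedDeriv_two (f : 𝕜 → 𝕜) : deriv (deriv f) = iteratedDeriv 2 f := by
  rw [iteratedDeriv_succ, iteratedDeriv_one]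

theorem deriv_deriv_fun_sum {ι : Type*} {s : Finset ι} {f : ι → 𝕜 → 𝕜}
    (hf : ∀ i ∈ s, ContDiff 𝕜 2 (f i)) (x : 𝕜) :
    deriv (deriv fun t => ∑ i ∈ s, f i t) x = ∑ i ∈ s, deriv (deriv (f i)) x := by
  simp only [deriv_deriv_eq_iteratedDeriv_two]
  exact iteratedDeriv_fun_sum fun i hi => (hf i hi).contDiffAt

theorem deriv_deriv_fun_mul {f g : 𝕜 → 𝕜} (hf : ContDiff 𝕜 2 f) (hg : ContDiff 𝕜 2 g) (x : 𝕜) :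
    deriv (deriv fun t => f t * g t) x =
      deriv (deriv f) x * g x + 2 * (deriv f x * deriv g x) + f x * deriv (deriv g) x := by
  simp only [deriv_deriv_eq_iteratedDeriv_two]
  rw [iteratedDeriv_fun_mul hf.contDiffAt hg.contDiffAt]
  simp only [Finset.sum_range_succ, Finset.range_one, Finset.sum_singleton, Nat.choose_zero_right,
    Nat.choose_succ_self_right, Nat.choose_self, Nat.cast_one, Nat.cast_ofNat, iteratedDeriv_zero,
    iteratedDeriv_one, Nat.reduceAdd, Nat.add_one_sub_one, tsub_zero, tsub_self, one_mul]
  ring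

end SecondDerivative

theorem Real.deriv_log_comp_eq_div {f : ℝ → ℝ} (hf : Differentiable ℝ f) (hf0 : ∀ x, f x ≠ 0) :
    deriv (fun x => Real.log (f x)) = fun x => deriv f x / f x :=
  funext fun x => deriv.log (hf x) (hf0 x)

theorem Real.deriv_deriv_log_comp {f : ℝ → ℝ} (hf : ContDiff ℝ 2 f) (hf0 : ∀ x, f x ≠ 0) (x : ℝ) :
    deriv (deriv fun x => Real.log (f x)) x =
      (deriv (deriv f) x * f x - deriv f x ^ 2) / f x ^ 2 := by
  have hf1 : Differentiable ℝ f := hf.differentiable two_ne_zero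
  have hf2 : Differentiable ℝ (deriv f) := (ContDiff.deriv' (n := 1) hf).differentiable one_ne_zero
  rw [Real.deriv_log_comp_eq_div hf1 hf0, deriv_fun_div (hf2 x) (hf1 x) (hf0 x)]
  ring

theorem surrogate_loss_second_order_missing_term_general
    {X : Type*} [Fintype X] (p f g : X → ℝ → ℝ)
    (hp_pos : ∀ x θ, 0 < p x θ)
    (hp_smooth : ∀ x, ContDiff ℝ 2 (p x))
    (hf_smooth : ∀ x, ContDiff ℝ 2 (f x))
    (hg : ∀ x θ, g x θ =
      f x θ * deriv (fun θ => Real.log (p x θ)) θ + deriv (f x) θ) :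
    ∀ θ : ℝ,
      deriv (deriv (fun θ => ∑ x, p x θ * f x θ)) θ -
        ∑ x, p x θ *
          (g x θ * deriv (fun θ => Real.log (p x θ)) θ
            + f x θ * deriv (deriv (fun θ => Real.log (p x θ))) θ
            + deriv (deriv (f x)) θ) =
      ∑ x, p x θ * (deriv (f x) θ * deriv (fun θ => Real.log (p x θ)) θ) := by
  intro θ
  have hp0 : ∀ x t, p x t ≠ 0 := fun x t => (hp_pos x t).ne'
  rw [deriv_deriv_fun_sum (fun x _ => (hp_smooth x).mul (hf_smooth x)), ← Finset.sum_sub_distrib]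
  refine Finset.sum_congr rfl fun x _ => ?_
  rw [deriv_deriv_fun_mul (hp_smooth x) (hf_smooth x), hg,
    Real.deriv_deriv_log_comp (hp_smooth x) (hp0 x),
    Real.deriv_log_comp_eq_div ((hp_smooth x).differentiable two_ne_zero) (hp0 x)]
  field_simp [hp0 x θ]
  ring

/-- The surrogate-loss second-order estimator misses exactly the term
`∂_θ f ∂_θ log p`: the true second derivative minus the expectation of the SL
second-order estimator equals the expectation of the missing term. -/
theorem surrogate_loss_second_order_missing_term
    {X : Type*} [Fintype X] (p f g : X → ℝ → ℝ)
    (hp_pos : ∀ x θ, 0 < p x θ)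
    (hp_sum : ∀ θ, ∑ x, p x θ = 1)
    (hp_smooth : ∀ x, ContDiff ℝ 2 (p x))
    (hf_smooth : ∀ x, ContDiff ℝ 2 (f x))
    (hg : ∀ x θ, g x θ =
      f x θ * deriv (fun θ => Real.log (p x θ)) θ + deriv (f x) θ) :
    ∀ θ : ℝ,
      deriv (deriv (fun θ => ∑ x, p x θ * f x θ)) θ -
        ∑ x, p x θ *
          (g x θ * deriv (fun θ => Real.log (p x θ)) θ
            + f x θ * deriv (deriv (fun θ => Real.log (p x θ))) θ
            + deriv (deriv (f x)) θ) =
      ∑ x, p x θ * (deriv (f x) θ * deriv (fun θ => Real.log (p x θ)) θ) :=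
  surrogate_loss_second_order_missing_term_general p f g hp_pos hp_smooth hf_smooth hg
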